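/- Let n ≥ 1 and let v, q : Fin n → ℝ be positive antitone sequences, and let p* : Fin n → ℝ be the recursively defined envy-free prices. Then p* is the unique revenue-maximal envy-free price vector for the identity allocation: if p is envy-free for the identity allocation and ∑_{j} p j = ∑_{j} p* j, then p i = p* i for every i. -/
import Mathlib


/-- Maximum of `f i` over indices `i > k`, well defined when `(k : ℕ) < n - 1`. -/
noncomputable def maxAbove {n : ℕ} (k : Fin n) (hk : (k : ℕ) < n - 1) (f : Fin n → ℝ) : ℝ :=
  (Finset.univ.filter fun i => k < i).sup'
    ⟨⟨(k : ℕ) + 1, by omega⟩, by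
      simp only [Finset.mem_filter, Finset.mem_univ, true_and, Fin.lt_def]
      omega⟩ f

/-- `p*` is the unique revenue-maximal envy-free price vector for the
identity allocation: any envy-free `p` with the same total revenue equals `p*`. -/
theorem pstar_unique_revenue_maximal (n : ℕ) (hn : 1 ≤ n) (v q : Fin n → ℝ)
    (hvpos : ∀ i, 0 < v i) (hqpos : ∀ i, 0 < q i)
    (hv : Antitone v) (hq : Antitone q)
    (pstar : Fin n → ℝ)
    (hlast : pstar ⟨n - 1, by omega⟩ = v ⟨n - 1, by omega⟩ * q ⟨n - 1, by omega⟩)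
    (hrec : ∀ (k : Fin n) (hk : (k : ℕ) < n - 1),
      pstar k = v k * q k - maxAbove k hk (fun i => v k * q i - pstar i)) :
    ∀ p : Fin n → ℝ,
      (∀ i, p i ≤ v i * q i) →
      (∀ i j : Fin n, v i * q i - p i ≥ v i * q j - p j) →
      ∑ j, p j = ∑ j, pstar j →
      ∀ i, p i = pstar i := by
  intro p hle hEF hsum
  have key : ∀ m : ℕ, ∀ k : Fin n, n - 1 - (k : ℕ) ≤ m → p k ≤ pstar k := by
    intro m
    induction m with
    | zero =>
      intro k hk
      have hk' : k = ⟨n - 1, by omega⟩ := Fin.ext (show (k:ℕ) = n - 1 by have := k.isLt; omega)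
      rw [hk', hlast]
      exact hle _
    | succ m ih =>
      intro k hk
      by_cases h : (k : ℕ) < n - 1
      · have hex : ∃ i ∈ Finset.univ.filter (fun i => k < i),
            maxAbove k h (fun i => v k * q i - pstar i) = v k * q i - pstar i := by
          unfold maxAbove
          exact Finset.exists_mem_eq_sup' _ _
        obtain ⟨i, hi, hmax⟩ := hex
        have hki : (k : ℕ) < (i : ℕ) := by
          have := (Finset.mem_filter.mp hi).2
          exact Fin.lt_def.mp this
        have hpi : p i ≤ pstar i := ih i (by omega)
        have henvy := hEF k i
        rw [hrec k h, hmax]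
        linarith
      · have hk' : k = ⟨n - 1, by omega⟩ := Fin.ext (show (k:ℕ) = n - 1 by have := k.isLt; omega)
        rw [hk', hlast]
        exact hle _
  have key' : ∀ i ∈ Finset.univ, p i ≤ pstar i := fun i _ => key (n - 1 - i) i le_rfl
  intro i
  exact (Finset.sum_eq_sum_iff_of_le key').mp hsum i (Finset.mem_univ i)
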